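/- arXiv:2503.03243 — 2 statements merged into one kernel-verified Lean document; each statement's English description precedes it below -/
import Mathlib

section
/- Let n and k be natural numbers. (1) If n ≥ 2k+1, then the up operator s : F(n,k) → F(n,k+1) is injective and the down operator s† : F(n,k+1) → F(n,k) is surjective. (2) If n ≤ 2k+1, then the up operator s : F(n,k) → F(n,k+1) is surjective and the down operator s† : F(n,k+1) → F(n,k) is injective. -/
/-- `FSub n k` is the real vector space of real-valued functions on the collection of
`k`-element subsets of `Fin n`. -/
abbrev FSub (n k : ℕ) : Type := {S : Finset (Fin n) // S.card = k} → ℝ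

/-- The up operator `s : F(n,k) → F(n,k+1)`, `(s a)(T) = Σ_{j ∈ T} a (T \ {j})`. -/
noncomputable def upOp (n k : ℕ) (a : FSub n k) : FSub n (k + 1) := fun T =>
  ∑ j ∈ T.1.attach, a ⟨T.1.erase j.1, by
    have h1 := Finset.card_erase_of_mem j.2
    have h2 := T.2
    omega⟩

/-- The down operator `s† : F(n,k+1) → F(n,k)`, `(s† b)(S) = Σ_{j ∉ S} b (S ∪ {j})`. -/
noncomputable def downOp (n k : ℕ) (b : FSub n (k + 1)) : FSub n k := fun S =>
  ∑ j ∈ (S.1ᶜ).attach, b ⟨insert j.1 S.1, by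
    have h1 := Finset.card_insert_of_notMem (Finset.mem_compl.mp j.2)
    have h2 := S.2
    omega⟩

namespace UpDown

open Finset

variable {n k : ℕ}

/-- Extend a function on `k`-subsets to all finsets by zero. -/
noncomputable def ex (n k : ℕ) (a : FSub n k) (X : Finset (Fin n)) : ℝ :=
  if h : X.card = k then a ⟨X, h⟩ else 0

lemma ex_eq (a : FSub n k) {X : Finset (Fin n)} (h : X.card = k) :
    ex n k a X = a ⟨X, h⟩ := dif_pos h

lemma upOp_eq (a : FSub n k) (T : {T : Finset (Fin n) // T.card = k + 1}) :
    upOp n k a T = ∑ j ∈ T.1, ex n k a (T.1.erase j) := by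
  rw [upOp, ← Finset.sum_attach T.1 (fun j => ex n k a (T.1.erase j))]
  refine Finset.sum_congr rfl fun j _ => (ex_eq a ?_).symm
  have h1 := Finset.card_erase_of_mem j.2
  have h2 := T.2
  omega

lemma downOp_eq (b : FSub n (k + 1)) (S : {S : Finset (Fin n) // S.card = k}) :
    downOp n k b S = ∑ j ∈ S.1ᶜ, ex n (k + 1) b (insert j S.1) := by
  rw [downOp, ← Finset.sum_attach S.1ᶜ (fun j => ex n (k + 1) b (insert j S.1))]
  refine Finset.sum_congr rfl fun j _ => (ex_eq b ?_).symm
  have h1 := Finset.card_insert_of_notMem (Finset.mem_compl.mp j.2)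
  have h2 := S.2
  omega

lemma sum_subtype_card (r : ℕ) (f : Finset (Fin n) → ℝ) :
    ∑ S : {S : Finset (Fin n) // S.card = r}, f S.1
      = ∑ S ∈ Finset.powersetCard r Finset.univ, f S :=
  (Finset.sum_subtype _ (fun X => Finset.mem_powersetCard_univ) f).symm

/-- Adjointness in the "extended" form. -/
lemma adj' (ea eb : Finset (Fin n) → ℝ) :
    ∑ T ∈ Finset.powersetCard (k + 1) (Finset.univ : Finset (Fin n)),
        ∑ j ∈ T, ea (T.erase j) * eb T
      = ∑ S ∈ Finset.powersetCard k (Finset.univ : Finset (Fin n)),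
        ∑ j ∈ Sᶜ, ea S * eb (insert j S) := by
  rw [Finset.sum_sigma' _ _ (fun T j => ea (T.erase j) * eb T),
    Finset.sum_sigma' _ _ (fun S j => ea S * eb (insert j S))]
  refine Finset.sum_nbij' (fun p => ⟨p.1.erase p.2, p.2⟩) (fun p => ⟨insert p.2 p.1, p.2⟩)
    ?_ ?_ ?_ ?_ ?_
  · rintro ⟨T, j⟩ hp
    rw [Finset.mem_sigma] at hp ⊢
    obtain ⟨hT, hj⟩ := hp
    rw [Finset.mem_powersetCard_univ] at hT ⊢
    exact ⟨by rw [Finset.card_erase_of_mem hj, hT]; rfl,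
      Finset.mem_compl.mpr (Finset.notMem_erase _ _)⟩
  · rintro ⟨S, j⟩ hp
    rw [Finset.mem_sigma] at hp ⊢
    obtain ⟨hS, hj⟩ := hp
    rw [Finset.mem_powersetCard_univ] at hS ⊢
    exact ⟨by rw [Finset.card_insert_of_notMem (Finset.mem_compl.mp hj), hS],
      Finset.mem_insert_self _ _⟩
  · rintro ⟨T, j⟩ hp
    rw [Finset.mem_sigma] at hp
    simp [Finset.insert_erase hp.2]
  · rintro ⟨S, j⟩ hp
    rw [Finset.mem_sigma] at hp
    simp [Finset.erase_insert (Finset.mem_compl.mp hp.2)]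
  · rintro ⟨T, j⟩ hp
    rw [Finset.mem_sigma] at hp
    simp [Finset.insert_erase hp.2]

/-- Adjointness: `⟨s a, b⟩ = ⟨a, s† b⟩`. -/
lemma adj (a : FSub n k) (b : FSub n (k + 1)) :
    ∑ T : {T : Finset (Fin n) // T.card = k + 1}, upOp n k a T * b T
      = ∑ S : {S : Finset (Fin n) // S.card = k}, a S * downOp n k b S := by
  have L : ∑ T : {T : Finset (Fin n) // T.card = k + 1}, upOp n k a T * b T
      = ∑ T ∈ Finset.powersetCard (k + 1) (Finset.univ : Finset (Fin n)),
          ∑ j ∈ T, ex n k a (T.erase j) * ex n (k + 1) b T := by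
    rw [← sum_subtype_card (k + 1)
      (fun T => ∑ j ∈ T, ex n k a (T.erase j) * ex n (k + 1) b T)]
    refine Finset.sum_congr rfl fun T _ => ?_
    rw [upOp_eq, ex_eq b T.2, Finset.sum_mul]
  have R : ∑ S : {S : Finset (Fin n) // S.card = k}, a S * downOp n k b S
      = ∑ S ∈ Finset.powersetCard k (Finset.univ : Finset (Fin n)),
          ∑ j ∈ Sᶜ, ex n k a S * ex n (k + 1) b (insert j S) := by
    rw [← sum_subtype_card k
      (fun S => ∑ j ∈ Sᶜ, ex n k a S * ex n (k + 1) b (insert j S))]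
    refine Finset.sum_congr rfl fun S _ => ?_
    rw [downOp_eq, ex_eq a S.2, Finset.mul_sum]
  rw [L, R, adj']

/-- The pointwise commutator identity `s† s a + 2(k+1) a = s s† a + n a` on level `k+1`. -/
lemma comm_eq (a : FSub n (k + 1)) (S : {S : Finset (Fin n) // S.card = k + 1}) :
    downOp n (k + 1) (upOp n (k + 1) a) S + (2 * (k + 1) : ℝ) * a S
      = upOp n k (downOp n k a) S + (n : ℝ) * a S := by
  obtain ⟨S, hS⟩ := S
  have hSn : k + 1 ≤ n := by
    have := Finset.card_le_univ S
    simpa [hS] using this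
  have hcompl : (Sᶜ : Finset (Fin n)).card = n - (k + 1) := by
    rw [Finset.card_compl, hS]; simp
  -- LHS main term
  have L : downOp n (k + 1) (upOp n (k + 1) a) ⟨S, hS⟩
      = ((n : ℝ) - (k + 1)) * a ⟨S, hS⟩
        + ∑ j ∈ Sᶜ, ∑ i ∈ S, ex n (k + 1) a (insert j (S.erase i)) := by
    rw [downOp_eq]
    have step : ∀ j ∈ Sᶜ, ex n (k + 2) (upOp n (k + 1) a) (insert j S)
        = a ⟨S, hS⟩ + ∑ i ∈ S, ex n (k + 1) a (insert j (S.erase i)) := by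
      intro j hj
      have hjS : j ∉ S := Finset.mem_compl.mp hj
      have hcard : (insert j S).card = (k + 1) + 1 := by
        rw [Finset.card_insert_of_notMem hjS, hS]
      rw [ex_eq _ hcard, upOp_eq]
      have hco : (⟨insert j S, hcard⟩ : {T : Finset (Fin n) // T.card = (k+1)+1}).1
          = insert j S := rfl
      rw [hco, Finset.sum_insert hjS]
      congr 1
      · rw [Finset.erase_insert hjS, ex_eq _ hS]
      · refine Finset.sum_congr rfl fun i hi => ?_
        have hij : j ≠ i := fun h => hjS (h ▸ hi)
        rw [Finset.erase_insert_of_ne hij]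
    rw [Finset.sum_congr rfl step, Finset.sum_add_distrib, Finset.sum_const, hcompl]
    congr 1
    rw [nsmul_eq_mul]
    congr 1
    push_cast [Nat.cast_sub hSn]
    ring
  -- RHS main term
  have R : upOp n k (downOp n k a) ⟨S, hS⟩
      = ((k : ℝ) + 1) * a ⟨S, hS⟩
        + ∑ i ∈ S, ∑ j ∈ Sᶜ, ex n (k + 1) a (insert j (S.erase i)) := by
    rw [upOp_eq]
    have step : ∀ i ∈ S, ex n k (downOp n k a) (S.erase i)
        = a ⟨S, hS⟩ + ∑ j ∈ Sᶜ, ex n (k + 1) a (insert j (S.erase i)) := by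
      intro i hi
      have hcard : (S.erase i).card = k := by
        rw [Finset.card_erase_of_mem hi, hS]; omega
      rw [ex_eq _ hcard, downOp_eq]
      have hco : (⟨S.erase i, hcard⟩ : {T : Finset (Fin n) // T.card = k}).1
          = S.erase i := rfl
      rw [hco]
      have hcpl : ((S.erase i)ᶜ : Finset (Fin n)) = insert i Sᶜ := Finset.compl_erase
      rw [hcpl, Finset.sum_insert (by simp [hi])]
      congr 1
      rw [Finset.insert_erase hi, ex_eq _ hS]
    rw [Finset.sum_congr rfl step, Finset.sum_add_distrib, Finset.sum_const, hS]
    congr 1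
    rw [nsmul_eq_mul]
    push_cast
    ring
  rw [L, R, Finset.sum_comm]
  push_cast
  ring

/-- The key norm identity: `‖s a‖² + 2(k+1)‖a‖² = ‖s† a‖² + n‖a‖²` at level `k+1`. -/
lemma norm_identity (a : FSub n (k + 1)) :
    (∑ T : {T : Finset (Fin n) // T.card = k + 2}, upOp n (k + 1) a T * upOp n (k + 1) a T)
        + (2 * (k + 1) : ℝ) * ∑ S : {S : Finset (Fin n) // S.card = k + 1}, a S * a S
      = (∑ R : {R : Finset (Fin n) // R.card = k}, downOp n k a R * downOp n k a R)
        + (n : ℝ) * ∑ S : {S : Finset (Fin n) // S.card = k + 1}, a S * a S := by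
  have h1 := adj a (upOp n (k + 1) a)
  have h2 : ∑ S : {S : Finset (Fin n) // S.card = k + 1},
      a S * upOp n k (downOp n k a) S
      = ∑ R : {R : Finset (Fin n) // R.card = k}, downOp n k a R * downOp n k a R := by
    rw [← adj (downOp n k a) a]
    exact Finset.sum_congr rfl fun T _ => mul_comm _ _
  have h3 : ∀ S : {S : Finset (Fin n) // S.card = k + 1},
      a S * downOp n (k + 1) (upOp n (k + 1) a) S + (2 * (k + 1) : ℝ) * (a S * a S)
      = a S * upOp n k (downOp n k a) S + (n : ℝ) * (a S * a S) := by
    intro S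
    have := comm_eq a S
    linear_combination a S * this
  calc (∑ T : {T : Finset (Fin n) // T.card = k + 2},
          upOp n (k + 1) a T * upOp n (k + 1) a T)
        + (2 * (k + 1) : ℝ) * ∑ S : {S : Finset (Fin n) // S.card = k + 1}, a S * a S
      = ∑ S : {S : Finset (Fin n) // S.card = k + 1},
          (a S * downOp n (k + 1) (upOp n (k + 1) a) S
            + (2 * (k + 1) : ℝ) * (a S * a S)) := by
        rw [Finset.sum_add_distrib, ← h1, ← Finset.mul_sum]
    _ = ∑ S : {S : Finset (Fin n) // S.card = k + 1},
          (a S * upOp n k (downOp n k a) S + (n : ℝ) * (a S * a S)) :=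
        Finset.sum_congr rfl fun S _ => h3 S
    _ = _ := by rw [Finset.sum_add_distrib, h2, ← Finset.mul_sum]

lemma sum_mul_self_nonneg {ι : Type*} [Fintype ι] (f : ι → ℝ) :
    0 ≤ ∑ i : ι, f i * f i :=
  Finset.sum_nonneg fun i _ => mul_self_nonneg _

lemma eq_zero_of_sum_mul_self {ι : Type*} [Fintype ι] (f : ι → ℝ)
    (h : ∑ i : ι, f i * f i ≤ 0) : f = 0 := by
  funext i
  have h0 : ∑ i : ι, f i * f i = 0 :=
    le_antisymm h (sum_mul_self_nonneg f)
  have := (Finset.sum_eq_zero_iff_of_nonneg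
    (fun i _ => mul_self_nonneg (f i))).mp h0 i (Finset.mem_univ i)
  exact mul_self_eq_zero.mp this

/-- up operator as a linear map -/
noncomputable def upL (n k : ℕ) : FSub n k →ₗ[ℝ] FSub n (k + 1) where
  toFun := upOp n k
  map_add' a b := by
    funext T
    simp [upOp, Finset.sum_add_distrib]
  map_smul' c a := by
    funext T
    simp [upOp, Finset.mul_sum]

/-- down operator as a linear map -/
noncomputable def downL (n k : ℕ) : FSub n (k + 1) →ₗ[ℝ] FSub n k where
  toFun := downOp n k
  map_add' a b := by
    funext S
    simp [downOp, Finset.sum_add_distrib]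
  map_smul' c a := by
    funext S
    simp [downOp, Finset.mul_sum]

lemma up_ker (h : 2 * k + 1 ≤ n) (a : FSub n k) (ha : upOp n k a = 0) : a = 0 := by
  match k with
  | 0 =>
    have hn : 0 < n := by omega
    funext S
    have hS : S.1 = ∅ := Finset.card_eq_zero.mp S.2
    have hT : ({⟨0, hn⟩} : Finset (Fin n)).card = 0 + 1 := by simp
    have := congrFun ha ⟨{⟨0, hn⟩}, hT⟩
    rw [upOp_eq] at this
    simp only [Finset.sum_singleton, Finset.erase_singleton] at this
    rw [ex_eq a (by simp)] at this
    have hSe : S = ⟨(∅ : Finset (Fin n)), by simp⟩ := Subtype.ext hS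
    rw [hSe]
    exact this
  | m + 1 =>
    have key := norm_identity (n := n) (k := m) a
    rw [ha] at key
    simp only [Pi.zero_apply, mul_zero, Finset.sum_const_zero, zero_add] at key
    have hd := sum_mul_self_nonneg (downOp n m a)
    have hnn : (2 * (m + 1) + 1 : ℝ) ≤ (n : ℝ) := by exact_mod_cast h
    have hA := sum_mul_self_nonneg a
    apply eq_zero_of_sum_mul_self
    nlinarith [key, hd, hnn, hA]

lemma down_ker (h : n ≤ 2 * k + 1) (b : FSub n (k + 1)) (hb : downOp n k b = 0) :
    b = 0 := by
  have key := norm_identity (n := n) (k := k) b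
  rw [hb] at key
  simp only [Pi.zero_apply, mul_zero, Finset.sum_const_zero, zero_add] at key
  have hu := sum_mul_self_nonneg (upOp n (k + 1) b)
  have hnn : (n : ℝ) ≤ (2 * k + 1 : ℝ) := by exact_mod_cast h
  have hB := sum_mul_self_nonneg b
  apply eq_zero_of_sum_mul_self
  nlinarith [key, hu, hnn, hB]

lemma up_inj (h : 2 * k + 1 ≤ n) : Function.Injective (upOp n k) := by
  intro a a' hup
  have : upOp n k (a - a') = 0 := by
    have := map_sub (upL n k) a a'
    simp only [upL, LinearMap.coe_mk, AddHom.coe_mk] at this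
    rw [this, show upOp n k a = upOp n k a' from hup, sub_self]
  have := up_ker h _ this
  exact sub_eq_zero.mp this

lemma down_inj (h : n ≤ 2 * k + 1) : Function.Injective (downOp n k) := by
  intro b b' hdn
  have : downOp n k (b - b') = 0 := by
    have := map_sub (downL n k) b b'
    simp only [downL, LinearMap.coe_mk, AddHom.coe_mk] at this
    rw [this, show downOp n k b = downOp n k b' from hdn, sub_self]
  have := down_ker h _ this
  exact sub_eq_zero.mp this

lemma down_surj (h : 2 * k + 1 ≤ n) : Function.Surjective (downOp n k) := by
  set E : FSub n k →ₗ[ℝ] FSub n k := (downL n k).comp (upL n k) with hE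
  have hEinj : Function.Injective E := by
    rw [injective_iff_map_eq_zero]
    intro a haE
    have hEa : downOp n k (upOp n k a) = 0 := haE
    have hpair : ∑ T : {T : Finset (Fin n) // T.card = k + 1},
        upOp n k a T * upOp n k a T = 0 := by
      rw [adj a (upOp n k a), hEa]
      simp
    have : upOp n k a = 0 := eq_zero_of_sum_mul_self _ (le_of_eq hpair)
    exact up_ker h a this
  have hEsurj : Function.Surjective E := LinearMap.injective_iff_surjective.mp hEinj
  intro c
  obtain ⟨a, ha⟩ := hEsurj c
  exact ⟨upOp n k a, ha⟩

lemma up_surj (h : n ≤ 2 * k + 1) : Function.Surjective (upOp n k) := by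
  set E : FSub n (k + 1) →ₗ[ℝ] FSub n (k + 1) := (upL n k).comp (downL n k) with hE
  have hEinj : Function.Injective E := by
    rw [injective_iff_map_eq_zero]
    intro b hbE
    have hEb : upOp n k (downOp n k b) = 0 := hbE
    have hpair : ∑ S : {S : Finset (Fin n) // S.card = k},
        downOp n k b S * downOp n k b S = 0 := by
      rw [← adj (downOp n k b) b, hEb]
      simp
    have : downOp n k b = 0 := eq_zero_of_sum_mul_self _ (le_of_eq hpair)
    exact down_ker h b this
  have hEsurj : Function.Surjective E := LinearMap.injective_iff_surjective.mp hEinj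
  intro c
  obtain ⟨b, hb⟩ := hEsurj c
  exact ⟨downOp n k b, hb⟩

end UpDown

/-- (1) If `n ≥ 2k+1`, the up operator `s : F(n,k) → F(n,k+1)` is injective and the down
operator `s† : F(n,k+1) → F(n,k)` is surjective.  (2) If `n ≤ 2k+1`, the up operator is
surjective and the down operator is injective. -/
theorem up_down_inj_surj (n k : ℕ) :
    (2 * k + 1 ≤ n →
      Function.Injective (upOp n k) ∧ Function.Surjective (downOp n k)) ∧
    (n ≤ 2 * k + 1 →
      Function.Surjective (upOp n k) ∧ Function.Injective (downOp n k)) := by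
  exact ⟨fun h => ⟨UpDown.up_inj h, UpDown.down_surj h⟩,
    fun h => ⟨UpDown.up_surj h, UpDown.down_inj h⟩⟩
end

section
/- Let n, k, ℓ, p be natural numbers with p ≥ 1 and p ≤ ℓ. (1) If k+p ≤ ℓ, then the double-index up operator S_[p] : FX(n,k,ℓ) → FX(n,k+p,ℓ−p) is injective and the double-index down operator S†_[p] : FX(n,k+p,ℓ−p) → FX(n,k,ℓ) is surjective. (2) If k+p ≥ ℓ, then S_[p] : FX(n,k,ℓ) → FX(n,k+p,ℓ−p) is surjective and S†_[p] : FX(n,k+p,ℓ−p) → FX(n,k,ℓ) is injective. -/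
/-- The collection of `k`-element subsets of `Fin n`, as a subtype. -/
abbrev Idx (n k : ℕ) := {S : Finset (Fin n) // S.card = k}

/-- `FX n k l` is the real vector space of real-valued functions on pairs `(I,J)` of
subsets of `Fin n` with `|I| = k` and `|J| = l`. -/
abbrev FX (n k l : ℕ) : Type := Idx n k × Idx n l → ℝ

/-- The double-index up operator `S_[p] : FX(n,k,ℓ) → FX(n,k+p,ℓ−p)` (for `p ≤ ℓ`),
`(S_[p] a)(I',J') = Σ_{P ⊆ I' \ J', |P| = p} a(I' \ P, J' ∪ P)`. -/
noncomputable def upX (n k l p : ℕ) (hp : p ≤ l) (a : FX n k l) : FX n (k + p) (l - p) :=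
  fun IJ => ∑ P ∈ (Finset.powersetCard p (IJ.1.1 \ IJ.2.1)).attach,
    a (⟨IJ.1.1 \ P.1, by
          obtain ⟨hsub, hcard⟩ := Finset.mem_powersetCard.mp P.2
          have hPI : P.1 ⊆ IJ.1.1 := hsub.trans Finset.sdiff_subset
          have h1 := Finset.card_sdiff_of_subset hPI
          have h2 := IJ.1.2
          omega⟩,
        ⟨IJ.2.1 ∪ P.1, by
          obtain ⟨hsub, hcard⟩ := Finset.mem_powersetCard.mp P.2
          have hdis : Disjoint IJ.2.1 P.1 := by
            rw [Finset.disjoint_left]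
            intro x hx hxP
            exact (Finset.mem_sdiff.mp (hsub hxP)).2 hx
          have h1 := Finset.card_union_of_disjoint hdis
          have h2 := IJ.2.2
          omega⟩)

/-- The double-index down operator `S†_[p] : FX(n,k+p,ℓ−p) → FX(n,k,ℓ)`,
`(S†_[p] b)(I,J) = Σ_{P ⊆ J \ I, |P| = p} b(I ∪ P, J \ P)`. -/
noncomputable def downX (n k l p : ℕ) (b : FX n (k + p) (l - p)) : FX n k l :=
  fun IJ => ∑ P ∈ (Finset.powersetCard p (IJ.2.1 \ IJ.1.1)).attach,
    b (⟨IJ.1.1 ∪ P.1, by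
          obtain ⟨hsub, hcard⟩ := Finset.mem_powersetCard.mp P.2
          have hdis : Disjoint IJ.1.1 P.1 := by
            rw [Finset.disjoint_left]
            intro x hx hxP
            exact (Finset.mem_sdiff.mp (hsub hxP)).2 hx
          have h1 := Finset.card_union_of_disjoint hdis
          have h2 := IJ.1.2
          omega⟩,
        ⟨IJ.2.1 \ P.1, by
          obtain ⟨hsub, hcard⟩ := Finset.mem_powersetCard.mp P.2
          have hPJ : P.1 ⊆ IJ.2.1 := hsub.trans Finset.sdiff_subset
          have h1 := Finset.card_sdiff_of_subset hPJ
          have h2 := IJ.2.2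
          omega⟩)


open Finset

namespace BGGAux

variable {n : ℕ}

/-- Raw functions on pairs of finsets. -/
abbrev RawF (n : ℕ) := Finset (Fin n) → Finset (Fin n) → ℝ

noncomputable def rup (p : ℕ) (A : RawF n) : RawF n :=
  fun I J => ∑ P ∈ (I \ J).powersetCard p, A (I \ P) (J ∪ P)

noncomputable def rdown (p : ℕ) (A : RawF n) : RawF n :=
  fun I J => ∑ P ∈ (J \ I).powersetCard p, A (I ∪ P) (J \ P)

def rswap (A : RawF n) : RawF n := fun I J => A J I

lemma rdown_eq_rup_rswap (p : ℕ) (A : RawF n) (I J : Finset (Fin n)) :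
    rdown p A I J = rup p (rswap A) J I := rfl

lemma rup_zero_fun (p : ℕ) : rup p (0 : RawF n) = 0 := by
  funext I J; simp [rup]

lemma rdown_zero_fun (p : ℕ) : rdown p (0 : RawF n) = 0 := by
  funext I J; simp [rdown]

lemma rup_zero (A : RawF n) : rup 0 A = A := by
  funext I J
  simp [rup]

lemma rup_one (A : RawF n) (I J : Finset (Fin n)) :
    rup 1 A I J = ∑ x ∈ I \ J, A (I \ {x}) (J ∪ {x}) := by
  rw [rup, powersetCard_one, sum_map]
  rfl

lemma rdown_one (A : RawF n) (I J : Finset (Fin n)) :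
    rdown 1 A I J = ∑ x ∈ J \ I, A (I ∪ {x}) (J \ {x}) := by
  rw [rdown, powersetCard_one, sum_map]
  rfl

lemma rup_add (p : ℕ) (A B : RawF n) (I J : Finset (Fin n)) :
    rup p (A + B) I J = rup p A I J + rup p B I J := by
  simp [rup, Finset.sum_add_distrib]

lemma rup_smul (p : ℕ) (r : ℝ) (A : RawF n) (I J : Finset (Fin n)) :
    rup p (r • A) I J = r * rup p A I J := by
  simp [rup, Finset.mul_sum]

/-- extraction of facts from powersetCard membership -/
lemma pc_facts {p : ℕ} {I J P : Finset (Fin n)} (h : P ∈ (I \ J).powersetCard p) :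
    P ⊆ I ∧ Disjoint P J ∧ P.card = p := by
  obtain ⟨hsub, hcard⟩ := Finset.mem_powersetCard.mp h
  refine ⟨fun x hx => (Finset.mem_sdiff.mp (hsub hx)).1, ?_, hcard⟩
  rw [Finset.disjoint_left]
  exact fun x hx hxJ => (Finset.mem_sdiff.mp (hsub hx)).2 hxJ

/-- The homogeneity predicate. -/
def Hom (k l : ℕ) (A : RawF n) : Prop :=
  ∀ I J, A I J ≠ 0 → I.card = k ∧ J.card = l

lemma hom_add {k l : ℕ} {A B : RawF n} (hA : Hom k l A) (hB : Hom k l B) :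
    Hom k l (A + B) := by
  intro I J h
  by_cases h1 : A I J = 0
  · exact hB I J (by simpa [h1] using h)
  · exact hA I J h1

lemma hom_smul {k l : ℕ} {A : RawF n} (r : ℝ) (hA : Hom k l A) :
    Hom k l (r • A) := by
  intro I J h
  apply hA I J
  intro h0
  simp [h0] at h

/-- `rup 1 (rdown 1 A)` is homogeneous of the same degrees. -/
lemma hom_UD {k l : ℕ} {A : RawF n} (hA : Hom k l A) :
    Hom k l (rup 1 (rdown 1 A)) := by
  intro I J h
  rw [rup_one] at h
  obtain ⟨x, hx, hx0⟩ := Finset.exists_ne_zero_of_sum_ne_zero h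
  rw [rdown_one] at hx0
  obtain ⟨y, hy, hy0⟩ := Finset.exists_ne_zero_of_sum_ne_zero hx0
  obtain ⟨hcI, hcJ⟩ := hA _ _ hy0
  rw [Finset.mem_sdiff] at hx
  obtain ⟨hyJx, hyI⟩ := Finset.mem_sdiff.mp hy
  have hxI : x ∈ I := hx.1
  have hxJ : x ∉ J := hx.2
  have hcI' : ((I \ {x}) ∪ {y}).card = k := hcI
  have hcJ' : ((J ∪ {x}) \ {y}).card = l := hcJ
  have h1 : (I \ {x}).card + 1 = I.card := by
    rw [Finset.card_sdiff_of_subset (by simpa using hxI)]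
    have := Finset.card_pos.mpr ⟨x, hxI⟩
    simp
    omega
  have h2 : ((I \ {x}) ∪ {y}).card = (I \ {x}).card + 1 := by
    rw [Finset.union_comm, ← Finset.insert_eq, Finset.card_insert_of_notMem hyI]
  have h3 : ((J ∪ {x}) \ {y}).card + 1 = (J ∪ {x}).card := by
    rw [Finset.card_sdiff_of_subset (by simpa using hyJx)]
    have := Finset.card_pos.mpr ⟨y, hyJx⟩
    simp
  have h4 : (J ∪ {x}).card = J.card + 1 := by
    rw [Finset.union_comm, ← Finset.insert_eq, Finset.card_insert_of_notMem hxJ]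
  constructor
  · omega
  · omega

end BGGAux

namespace BGGAux2
open BGGAux

variable {n : ℕ}

/-- Reindexing pairs (Q, y∈Q) with |Q| = p+1 as (Q', y∉Q') with |Q'| = p. -/
lemma pair_sum (p : ℕ) (S : Finset (Fin n)) (F : Finset (Fin n) → Fin n → ℝ) :
    ∑ Q ∈ S.powersetCard (p+1), ∑ y ∈ Q, F Q y
      = ∑ Q' ∈ S.powersetCard p, ∑ y ∈ S \ Q', F (insert y Q') y := by
  rw [Finset.sum_sigma', Finset.sum_sigma']
  refine Finset.sum_nbij' (fun x => ⟨x.1.erase x.2, x.2⟩) (fun x => ⟨insert x.2 x.1, x.2⟩)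
    ?_ ?_ ?_ ?_ ?_
  · rintro ⟨Q, y⟩ h
    obtain ⟨h1, h2⟩ := Finset.mem_sigma.mp h
    obtain ⟨hsub, hcard⟩ := Finset.mem_powersetCard.mp h1
    refine Finset.mem_sigma.mpr ⟨Finset.mem_powersetCard.mpr ⟨(Finset.erase_subset _ _).trans hsub, ?_⟩, ?_⟩
    · rw [Finset.card_erase_of_mem h2, hcard]
      omega
    · exact Finset.mem_sdiff.mpr ⟨hsub h2, Finset.notMem_erase _ _⟩
  · rintro ⟨Q', y⟩ h
    obtain ⟨h1, h2⟩ := Finset.mem_sigma.mp h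
    obtain ⟨hsub, hcard⟩ := Finset.mem_powersetCard.mp h1
    obtain ⟨hyS, hyQ'⟩ := Finset.mem_sdiff.mp h2
    refine Finset.mem_sigma.mpr ⟨Finset.mem_powersetCard.mpr ⟨?_, ?_⟩, Finset.mem_insert_self _ _⟩
    · exact Finset.insert_subset hyS hsub
    · rw [Finset.card_insert_of_notMem hyQ', hcard]
  · rintro ⟨Q, y⟩ h
    obtain ⟨h1, h2⟩ := Finset.mem_sigma.mp h
    simp [Finset.insert_erase h2]
  · rintro ⟨Q', y⟩ h
    obtain ⟨h1, h2⟩ := Finset.mem_sigma.mp h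
    obtain ⟨hyS, hyQ'⟩ := Finset.mem_sdiff.mp h2
    simp [Finset.erase_insert hyQ']
  · rintro ⟨Q, y⟩ h
    obtain ⟨h1, h2⟩ := Finset.mem_sigma.mp h
    simp [Finset.insert_erase h2]

/-- `U_p ∘ U_1 = (p+1) U_{p+1}`. -/
lemma rup_rup_one (p : ℕ) (A : RawF n) (I J : Finset (Fin n)) :
    rup p (rup 1 A) I J = ((p+1 : ℕ) : ℝ) * rup (p+1) A I J := by
  calc rup p (rup 1 A) I J
      = ∑ Q' ∈ (I \ J).powersetCard p, ∑ y ∈ (I \ J) \ Q',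
          A (I \ insert y Q') (J ∪ insert y Q') := by
        rw [rup]
        refine Finset.sum_congr rfl fun Q' hQ' => ?_
        rw [rup_one]
        rw [show (I \ Q') \ (J ∪ Q') = (I \ J) \ Q' by ext z; simp; tauto]
        refine Finset.sum_congr rfl fun y hy => ?_
        congr 1
        · ext z; simp; tauto
        · ext z; simp
    _ = ∑ Q ∈ (I \ J).powersetCard (p+1), ∑ y ∈ Q, A (I \ Q) (J ∪ Q) :=
        (pair_sum p (I \ J) fun Q _ => A (I \ Q) (J ∪ Q)).symm
    _ = ((p+1 : ℕ) : ℝ) * rup (p+1) A I J := by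
        rw [rup, Finset.mul_sum]
        refine Finset.sum_congr rfl fun Q hQ => ?_
        rw [Finset.sum_const, (Finset.mem_powersetCard.mp hQ).2, nsmul_eq_mul]


noncomputable def cross (p : ℕ) (A : RawF n) (I J : Finset (Fin n)) : ℝ :=
  ∑ x ∈ J \ I, ∑ Q ∈ (I \ J).powersetCard (p+1), A (insert x (I \ Q)) ((J ∪ Q).erase x)

lemma R4a (p : ℕ) (A : RawF n) (I J : Finset (Fin n)) :
    rdown 1 (rup (p+1) A) I J
      = ((J \ I).card : ℝ) * rup p A I J + cross p A I J := by
  rw [rdown_one]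
  have key : ∀ x ∈ J \ I,
      rup (p+1) A (I ∪ {x}) (J \ {x})
        = (∑ Q ∈ (I \ J).powersetCard (p+1), A (insert x (I \ Q)) ((J ∪ Q).erase x))
          + rup p A I J := by
    intro x hx
    obtain ⟨hxJ, hxI⟩ := Finset.mem_sdiff.mp hx
    have hxIJ : x ∉ I \ J := by simp [hxI]
    have hset : (I ∪ {x}) \ (J \ {x}) = insert x (I \ J) := by
      ext z
      simp only [Finset.mem_sdiff, Finset.mem_union, Finset.mem_singleton, Finset.mem_insert]
      by_cases hz : z = x
      · subst hz; simp [hxJ]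
      · simp [hz] <;> tauto
    rw [rup, hset, Finset.powersetCard_succ_insert hxIJ p]
    have hdisj : Disjoint ((I \ J).powersetCard (p+1))
        (((I \ J).powersetCard p).image (insert x)) := by
      rw [Finset.disjoint_left]
      rintro Q hQ hQ'
      obtain ⟨Q'', hQ'', rfl⟩ := Finset.mem_image.mp hQ'
      exact hxIJ ((Finset.mem_powersetCard.mp hQ).1 (Finset.mem_insert_self _ _))
    rw [Finset.sum_union hdisj]
    congr 1
    · -- first part
      refine Finset.sum_congr rfl fun Q hQ => ?_
      obtain ⟨hQI, hQJ, hQc⟩ := pc_facts hQ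
      have hxQ : x ∉ Q := fun h => hxIJ ((Finset.mem_powersetCard.mp hQ).1 h)
      congr 1
      · ext z
        simp only [Finset.mem_sdiff, Finset.mem_union, Finset.mem_singleton, Finset.mem_insert]
        by_cases hz : z = x
        · subst hz; simp [hxQ]
        · simp [hz] <;> tauto
      · rw [Finset.erase_eq]
        ext z
        simp only [Finset.mem_sdiff, Finset.mem_union, Finset.mem_singleton]
        by_cases hz : z = x
        · subst hz; simp [hxQ]
        · simp [hz] <;> tauto
    · -- second part
      rw [Finset.sum_image (fun Q1 h1 Q2 h2 he => by
        have hx1 : x ∉ Q1 := fun h => hxIJ ((Finset.mem_powersetCard.mp h1).1 h)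
        have hx2 : x ∉ Q2 := fun h => hxIJ ((Finset.mem_powersetCard.mp h2).1 h)
        rw [← Finset.erase_insert hx1, he, Finset.erase_insert hx2])]
      rw [rup]
      refine Finset.sum_congr rfl fun Q' hQ' => ?_
      have hxQ' : x ∉ Q' := fun h => hxIJ ((Finset.mem_powersetCard.mp hQ').1 h)
      congr 1
      · ext z
        simp only [Finset.mem_sdiff, Finset.mem_union, Finset.mem_singleton, Finset.mem_insert]
        by_cases hz : z = x
        · subst hz; simp [hxI, hxQ']
        · simp [hz] <;> tauto
      · ext z
        simp only [Finset.mem_sdiff, Finset.mem_union, Finset.mem_singleton, Finset.mem_insert]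
        by_cases hz : z = x
        · subst hz; simp [hxJ]
        · simp [hz] <;> tauto
  rw [Finset.sum_congr rfl key, Finset.sum_add_distrib, Finset.sum_const, nsmul_eq_mul]
  rw [cross]
  ring

lemma R4b (p : ℕ) (A : RawF n) (I J : Finset (Fin n)) :
    rup (p+1) (rdown 1 A) I J
      = (((I \ J).card - p : ℕ) : ℝ) * rup p A I J + cross p A I J := by
  rw [rup]
  have key : ∀ Q ∈ (I \ J).powersetCard (p+1),
      rdown 1 A (I \ Q) (J ∪ Q)
        = (∑ y ∈ Q, A ((I \ Q) ∪ {y}) ((J ∪ Q) \ {y}))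
          + ∑ y ∈ J \ I, A ((I \ Q) ∪ {y}) ((J ∪ Q) \ {y}) := by
    intro Q hQ
    obtain ⟨hQI, hQJ, hQc⟩ := pc_facts hQ
    have hset : (J ∪ Q) \ (I \ Q) = Q ∪ (J \ I) := by
      ext z
      simp only [Finset.mem_sdiff, Finset.mem_union]
      by_cases hz : z ∈ Q
      · simp [hz, hQI hz]
      · simp [hz] <;> tauto
    have hdisj : Disjoint Q (J \ I) := by
      rw [Finset.disjoint_left]
      exact fun z hz hz' => (Finset.mem_sdiff.mp hz').2 (hQI hz)
    rw [rdown_one, hset, Finset.sum_union hdisj]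
  rw [Finset.sum_congr rfl key, Finset.sum_add_distrib]
  congr 1
  · -- coefficient part:  ∑_Q ∑_{y ∈ Q}
    rw [pair_sum p (I \ J) (fun Q y => A ((I \ Q) ∪ {y}) ((J ∪ Q) \ {y}))]
    rw [rup, Finset.mul_sum]
    refine Finset.sum_congr rfl fun Q' hQ' => ?_
    obtain ⟨hQI, hQJ, hQc⟩ := pc_facts hQ'
    have hQsub : Q' ⊆ I \ J := (Finset.mem_powersetCard.mp hQ').1
    have hstep : ∀ y ∈ (I \ J) \ Q',
        A ((I \ insert y Q') ∪ {y}) ((J ∪ insert y Q') \ {y}) = A (I \ Q') (J ∪ Q') := by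
      intro y hy
      obtain ⟨hyIJ, hyQ'⟩ := Finset.mem_sdiff.mp hy
      obtain ⟨hyI, hyJ⟩ := Finset.mem_sdiff.mp hyIJ
      congr 1
      · ext z
        simp only [Finset.mem_sdiff, Finset.mem_union, Finset.mem_singleton, Finset.mem_insert]
        by_cases hz : z = y
        · subst hz; simp [hyI, hyQ']
        · simp [hz] <;> tauto
      · ext z
        simp only [Finset.mem_sdiff, Finset.mem_union, Finset.mem_singleton, Finset.mem_insert]
        by_cases hz : z = y
        · subst hz; simp [hyJ, hyQ']
        · simp [hz] <;> tauto
    rw [Finset.sum_congr rfl hstep, Finset.sum_const, Finset.card_sdiff_of_subset hQsub,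
      (Finset.mem_powersetCard.mp hQ').2, nsmul_eq_mul]
  · -- cross part
    rw [cross, Finset.sum_comm]
    refine Finset.sum_congr rfl fun x hx => ?_
    refine Finset.sum_congr rfl fun Q hQ => ?_
    rw [Finset.union_comm (I \ Q), ← Finset.insert_eq, Finset.erase_eq]


noncomputable def rinner (A B : RawF n) : ℝ :=
  ∑ IJ : Finset (Fin n) × Finset (Fin n), A IJ.1 IJ.2 * B IJ.1 IJ.2

lemma rinner_self_nonneg (A : RawF n) : 0 ≤ rinner A A :=
  Finset.sum_nonneg fun _ _ => mul_self_nonneg _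

lemma rinner_self_eq_zero {A : RawF n} (h : rinner A A = 0) : A = 0 := by
  funext I J
  have h0 := (Finset.sum_eq_zero_iff_of_nonneg
    (fun (x : Finset (Fin n) × Finset (Fin n)) _ => mul_self_nonneg (A x.1 x.2))).mp h
    (I, J) (Finset.mem_univ _)
  exact mul_self_eq_zero.mp h0

lemma rinner_zero_right (A : RawF n) : rinner A 0 = 0 := by simp [rinner]

lemma rinner_smul_left (r : ℝ) (A B : RawF n) : rinner (r • A) B = r * rinner A B := by
  simp only [rinner, Pi.smul_apply, smul_eq_mul, Finset.mul_sum, mul_assoc]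

/-- Adjointness of the raw up and down operators. -/
lemma radj (p : ℕ) (A B : RawF n) : rinner (rup p A) B = rinner A (rdown p B) := by
  unfold rinner rup rdown
  simp_rw [Finset.sum_mul, Finset.mul_sum]
  rw [Finset.sum_sigma', Finset.sum_sigma']
  refine Finset.sum_nbij' (fun x => ⟨(x.1.1 \ x.2, x.1.2 ∪ x.2), x.2⟩)
    (fun x => ⟨(x.1.1 ∪ x.2, x.1.2 \ x.2), x.2⟩) ?_ ?_ ?_ ?_ ?_
  · rintro ⟨⟨I, J⟩, P⟩ h
    obtain ⟨-, h2⟩ := Finset.mem_sigma.mp h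
    refine Finset.mem_sigma.mpr ⟨Finset.mem_univ _, Finset.mem_powersetCard.mpr ⟨?_, (Finset.mem_powersetCard.mp h2).2⟩⟩
    intro z hz
    simp only [Finset.mem_sdiff, Finset.mem_union]
    exact ⟨Or.inr hz, fun hc => hc.2 hz⟩
  · rintro ⟨⟨I, J⟩, P⟩ h
    obtain ⟨-, h2⟩ := Finset.mem_sigma.mp h
    refine Finset.mem_sigma.mpr ⟨Finset.mem_univ _, Finset.mem_powersetCard.mpr ⟨?_, (Finset.mem_powersetCard.mp h2).2⟩⟩
    intro z hz
    simp only [Finset.mem_sdiff, Finset.mem_union]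
    exact ⟨Or.inr hz, fun hc => hc.2 hz⟩
  · rintro ⟨⟨I, J⟩, P⟩ h
    obtain ⟨-, h2⟩ := Finset.mem_sigma.mp h
    obtain ⟨hPI, hPJ, -⟩ := pc_facts h2
    have e1 : (I \ P) ∪ P = I := Finset.sdiff_union_of_subset hPI
    have e2 : (J ∪ P) \ P = J := Finset.union_sdiff_cancel_right hPJ.symm
    simp [e1, e2]
  · rintro ⟨⟨I, J⟩, P⟩ h
    obtain ⟨-, h2⟩ := Finset.mem_sigma.mp h
    obtain ⟨hPJ, hPI, -⟩ := pc_facts h2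
    have e1 : (I ∪ P) \ P = I := Finset.union_sdiff_cancel_right hPI.symm
    have e2 : (J \ P) ∪ P = J := Finset.sdiff_union_of_subset hPJ
    simp [e1, e2]
  · rintro ⟨⟨I, J⟩, P⟩ h
    obtain ⟨-, h2⟩ := Finset.mem_sigma.mp h
    obtain ⟨hPI, hPJ, -⟩ := pc_facts h2
    have e1 : (I \ P) ∪ P = I := Finset.sdiff_union_of_subset hPI
    have e2 : (J ∪ P) \ P = J := Finset.union_sdiff_cancel_right hPJ.symm
    simp [e1, e2]

/-- Main raw injectivity: if `A` is `(k,l)`-homogeneous with `k + p ≤ l` and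
`S_[p] A = 0`, then `A = 0`. -/
lemma raw_inj (p : ℕ) {k l : ℕ} (hkl : k + p ≤ l) :
    ∀ A : RawF n, Hom k l A → rup p A = 0 → A = 0 := by
  induction p with
  | zero => intro A hA h; rw [rup_zero] at h; exact h
  | succ p ih =>
    intro A hA hup
    set c : ℝ := (l : ℝ) - k - p with hc
    have hc1 : (1 : ℝ) ≤ c := by
      rw [hc]
      have : (k : ℝ) + p + 1 ≤ l := by exact_mod_cast hkl
      linarith
    -- Step 1: rup (p+1) (rdown 1 A) = (-c) • rup p A
    have key : ∀ I J, rup (p+1) (rdown 1 A) I J = -c * rup p A I J := by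
      intro I J
      have h0 : rdown 1 (rup (p+1) A) I J = 0 := by rw [hup, rdown_zero_fun]; rfl
      have h4a := R4a p A I J
      have h4b := R4b p A I J
      rw [h0] at h4a
      by_cases hX : rup p A I J = 0
      · rw [hX, mul_zero, zero_add] at h4a
        rw [hX, mul_zero, h4b, hX, mul_zero, zero_add, ← h4a]
      · -- extract card facts
        obtain ⟨P, hP, hPne⟩ := Finset.exists_ne_zero_of_sum_ne_zero hX
        obtain ⟨hPI, hPJ, hPc⟩ := pc_facts hP
        obtain ⟨hcI, hcJ⟩ := hA _ _ hPne
        have hPIJ : P ⊆ I \ J := (Finset.mem_powersetCard.mp hP).1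
        have hIk : I.card = k + p := by
          have := Finset.card_sdiff_add_card_eq_card hPI
          omega
        have hJl : J.card + p = l := by
          have := Finset.card_union_of_disjoint hPJ.symm
          omega
        have hple : p ≤ (I \ J).card := by
          have := Finset.card_le_card hPIJ
          omega
        have h1 : (I \ J).card + (I ∩ J).card = k + p := by
          have := Finset.card_inter_add_card_sdiff I J
          omega
        have h2 : (J \ I).card + (I ∩ J).card + p = l := by
          have := Finset.card_inter_add_card_sdiff J I
          rw [Finset.inter_comm] at this
          omega
        have hcoef : (((I \ J).card - p : ℕ) : ℝ) - ((J \ I).card : ℝ) = -c := by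
          rw [Nat.cast_sub hple, hc]
          have e1 : ((I \ J).card : ℝ) + ((I ∩ J).card : ℝ) = (k : ℝ) + p := by exact_mod_cast h1
          have e2 : ((J \ I).card : ℝ) + ((I ∩ J).card : ℝ) + p = (l : ℝ) := by exact_mod_cast h2
          linarith
        have hcross : cross p A I J = -(((J \ I).card : ℝ) * rup p A I J) := by linarith [h4a]
        have e : (((I \ J).card - p : ℕ) : ℝ) = -c + ((J \ I).card : ℝ) := by
          linarith [hcoef]
        rw [h4b, hcross, e]
        ring
    -- Step 2: use U_p U_1 = (p+1) U_{p+1} and the inductive hypothesis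
    have hkl' : k + p ≤ l := by omega
    set B : RawF n := rup 1 (rdown 1 A) with hB
    have hcomb : rup p (B + (((p+1 : ℕ) : ℝ) * c) • A) = 0 := by
      funext I J
      have e1 : rup p (B + (((p+1 : ℕ) : ℝ) * c) • A) I J
          = rup p B I J + ((p+1 : ℕ) : ℝ) * c * rup p A I J := by
        rw [rup_add, rup_smul]
      rw [e1, hB, rup_rup_one, key I J]
      show ((p+1 : ℕ) : ℝ) * (-c * rup p A I J) + ((p+1 : ℕ) : ℝ) * c * rup p A I J = 0
      ring
    have hhom : Hom k l (B + (((p+1 : ℕ) : ℝ) * c) • A) :=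
      hom_add (hom_UD hA) (hom_smul _ hA)
    have hzero := ih hkl' _ hhom hcomb
    -- so B = -((p+1) * c) • A
    have hBA : B = (-(((p+1 : ℕ) : ℝ) * c)) • A := by
      funext I J
      have := congrFun (congrFun hzero I) J
      simp only [Pi.add_apply, Pi.smul_apply, smul_eq_mul, Pi.zero_apply] at this ⊢
      linarith
    -- Step 3: inner product argument
    have hinner : rinner B A = rinner (rdown 1 A) (rdown 1 A) := by
      rw [hB]
      exact radj 1 (rdown 1 A) A
    have hpos : 0 ≤ rinner (rdown 1 A) (rdown 1 A) := rinner_self_nonneg _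
    have hBA' : rinner B A = -(((p+1 : ℕ) : ℝ) * c) * rinner A A := by
      rw [hBA, rinner_smul_left]
    have hAA : 0 ≤ rinner A A := rinner_self_nonneg A
    have hAA0 : rinner A A = 0 := by
      have hpc : (0 : ℝ) < ((p+1 : ℕ) : ℝ) * c := by
        have : (0 : ℝ) < ((p+1 : ℕ) : ℝ) := by positivity
        nlinarith
      nlinarith
    exact rinner_self_eq_zero hAA0

end BGGAux2

namespace BGGAux3
open BGGAux BGGAux2

variable {n : ℕ}

noncomputable def toFun (k l : ℕ) (a : FX n k l) : RawF n :=
  fun I J => if h : I.card = k ∧ J.card = l then a (⟨I, h.1⟩, ⟨J, h.2⟩) else 0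

lemma toFun_apply (k l : ℕ) (a : FX n k l) (IJ : Idx n k × Idx n l) :
    toFun k l a IJ.1.1 IJ.2.1 = a IJ := by
  obtain ⟨⟨I, hI⟩, ⟨J, hJ⟩⟩ := IJ
  rw [toFun, dif_pos ⟨hI, hJ⟩]

lemma toFun_hom (k l : ℕ) (a : FX n k l) : Hom k l (toFun k l a) := by
  intro I J h
  by_cases hc : I.card = k ∧ J.card = l
  · exact hc
  · exact absurd (dif_neg hc) h

lemma toFun_eq_zero {k l : ℕ} {a : FX n k l} (h : toFun k l a = 0) : a = 0 := by
  funext IJ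
  rw [← toFun_apply k l a IJ, h]
  rfl

lemma toFun_zero (k l : ℕ) : toFun k l (0 : FX n k l) = 0 := by
  funext I J
  rw [toFun]
  split <;> rfl

lemma toFun_up (k l p : ℕ) (hp : p ≤ l) (a : FX n k l) :
    toFun (k+p) (l-p) (upX n k l p hp a) = rup p (toFun k l a) := by
  funext I J
  rw [rup]
  by_cases h : I.card = k + p ∧ J.card = l - p
  · rw [toFun, dif_pos h]
    simp only [upX]
    rw [← Finset.sum_attach ((I \ J).powersetCard p) (fun P => toFun k l a (I \ P) (J ∪ P))]
    refine Finset.sum_congr rfl fun P _ => ?_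
    obtain ⟨hPI, hPJ, hPc⟩ := pc_facts P.2
    have hc1 : (I \ P.1).card = k := by
      have := Finset.card_sdiff_add_card_eq_card hPI
      omega
    have hc2 : (J ∪ P.1).card = l := by
      have := Finset.card_union_of_disjoint hPJ.symm
      omega
    rw [toFun, dif_pos ⟨hc1, hc2⟩]
  · rw [toFun, dif_neg h]
    refine (Finset.sum_eq_zero fun P hP => ?_).symm
    obtain ⟨hPI, hPJ, hPc⟩ := pc_facts hP
    by_cases hc : (I \ P).card = k ∧ (J ∪ P).card = l
    · exfalso
      apply h
      have e1 := Finset.card_sdiff_add_card_eq_card hPI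
      have e2 := Finset.card_union_of_disjoint hPJ.symm
      omega
    · exact dif_neg hc

lemma toFun_down (k l p : ℕ) (hp : p ≤ l) (b : FX n (k+p) (l-p)) :
    toFun k l (downX n k l p b) = rdown p (toFun (k+p) (l-p) b) := by
  funext I J
  rw [rdown]
  by_cases h : I.card = k ∧ J.card = l
  · rw [toFun, dif_pos h]
    simp only [downX]
    rw [← Finset.sum_attach ((J \ I).powersetCard p)
      (fun P => toFun (k+p) (l-p) b (I ∪ P) (J \ P))]
    refine Finset.sum_congr rfl fun P _ => ?_
    obtain ⟨hPJ, hPI, hPc⟩ := pc_facts P.2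
    have hc1 : (I ∪ P.1).card = k + p := by
      have := Finset.card_union_of_disjoint hPI.symm
      omega
    have hc2 : (J \ P.1).card = l - p := by
      have := Finset.card_sdiff_add_card_eq_card hPJ
      omega
    rw [toFun, dif_pos ⟨hc1, hc2⟩]
  · rw [toFun, dif_neg h]
    refine (Finset.sum_eq_zero fun P hP => ?_).symm
    obtain ⟨hPJ, hPI, hPc⟩ := pc_facts hP
    by_cases hc : (I ∪ P).card = k + p ∧ (J \ P).card = l - p
    · exfalso
      apply h
      have e1 := Finset.card_union_of_disjoint hPI.symm
      have e2 := Finset.card_sdiff_add_card_eq_card hPJ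
      have e3 := Finset.card_le_card hPJ
      omega
    · exact dif_neg hc

noncomputable def upL (n k l p : ℕ) (hp : p ≤ l) : FX n k l →ₗ[ℝ] FX n (k+p) (l-p) where
  toFun := upX n k l p hp
  map_add' a b := by
    funext IJ
    simp only [upX, Pi.add_apply]
    rw [Finset.sum_add_distrib]
  map_smul' r a := by
    funext IJ
    simp only [upX, Pi.smul_apply, smul_eq_mul, RingHom.id_apply]
    rw [Finset.mul_sum]

noncomputable def downL (n k l p : ℕ) : FX n (k+p) (l-p) →ₗ[ℝ] FX n k l where
  toFun := downX n k l p
  map_add' a b := by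
    funext IJ
    simp only [downX, Pi.add_apply]
    rw [Finset.sum_add_distrib]
  map_smul' r a := by
    funext IJ
    simp only [downX, Pi.smul_apply, smul_eq_mul, RingHom.id_apply]
    rw [Finset.mul_sum]

lemma upX_injective {k l p : ℕ} (hp : p ≤ l) (h : k + p ≤ l) :
    Function.Injective (upX n k l p hp) := by
  intro a b hab
  have h0 : upX n k l p hp (a - b) = 0 := by
    have e : upL n k l p hp (a - b) = upL n k l p hp a - upL n k l p hp b := map_sub _ _ _
    rw [show upX n k l p hp (a - b) = upL n k l p hp (a - b) from rfl, e,
      show upL n k l p hp a = upX n k l p hp a from rfl,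
      show upL n k l p hp b = upX n k l p hp b from rfl, hab, sub_self]
  have hraw : rup p (toFun k l (a - b)) = 0 := by
    rw [← toFun_up k l p hp, h0, toFun_zero]
  have hz := toFun_eq_zero (raw_inj p h _ (toFun_hom k l (a - b)) hraw)
  exact sub_eq_zero.mp hz

lemma downX_injective {k l p : ℕ} (hp : p ≤ l) (h : l ≤ k + p) :
    Function.Injective (downX n k l p) := by
  intro a b hab
  have h0 : downX n k l p (a - b) = 0 := by
    have e : downL n k l p (a - b) = downL n k l p a - downL n k l p b := map_sub _ _ _
    rw [show downX n k l p (a - b) = downL n k l p (a - b) from rfl, e,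
      show downL n k l p a = downX n k l p a from rfl,
      show downL n k l p b = downX n k l p b from rfl, hab, sub_self]
  have hraw : rdown p (toFun (k+p) (l-p) (a - b)) = 0 := by
    rw [← toFun_down k l p hp, h0, toFun_zero]
  have hsw : rup p (rswap (toFun (k+p) (l-p) (a - b))) = 0 := by
    funext I J
    exact congrFun (congrFun hraw J) I
  have hhom : Hom (l - p) (k + p) (rswap (toFun (k+p) (l-p) (a - b))) := by
    intro I J hne
    obtain ⟨h1, h2⟩ := toFun_hom (k+p) (l-p) (a - b) J I hne
    exact ⟨h2, h1⟩
  have hle : (l - p) + p ≤ k + p := by omega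
  have hs := raw_inj p hle _ hhom hsw
  have hC : toFun (k+p) (l-p) (a - b) = 0 := by
    funext I J
    exact congrFun (congrFun hs J) I
  exact sub_eq_zero.mp (toFun_eq_zero hC)

lemma downX_surjective {k l p : ℕ} (hp : p ≤ l) (h : k + p ≤ l) :
    Function.Surjective (downX n k l p) := by
  have hinj : Function.Injective ((downL n k l p).comp (upL n k l p hp)) := by
    intro f g hfg
    have h0 : (downL n k l p).comp (upL n k l p hp) (f - g) = 0 := by
      rw [map_sub, hfg, sub_self]
    have hraw : rdown p (rup p (toFun k l (f - g))) = 0 := by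
      have e : toFun k l (downX n k l p (upX n k l p hp (f - g))) = 0 := by
        rw [show downX n k l p (upX n k l p hp (f - g))
              = (downL n k l p).comp (upL n k l p hp) (f - g) from rfl, h0, toFun_zero]
      rw [toFun_down k l p hp, toFun_up k l p hp] at e
      exact e
    have hzero : rinner (rup p (toFun k l (f - g))) (rup p (toFun k l (f - g))) = 0 := by
      rw [radj p _ _, hraw, rinner_zero_right]
    have hup0 : rup p (toFun k l (f - g)) = 0 := rinner_self_eq_zero hzero
    have hF : toFun k l (f - g) = 0 := raw_inj p h _ (toFun_hom k l (f - g)) hup0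
    exact sub_eq_zero.mp (toFun_eq_zero hF)
  have hsurj := (LinearMap.injective_iff_surjective).mp hinj
  intro a
  obtain ⟨f, hf⟩ := hsurj a
  exact ⟨upX n k l p hp f, hf⟩

lemma rinner_zero_left (B : RawF n) : rinner 0 B = 0 := by simp [rinner]

lemma upX_surjective {k l p : ℕ} (hp : p ≤ l) (h : l ≤ k + p) :
    Function.Surjective (upX n k l p hp) := by
  have hinj : Function.Injective ((upL n k l p hp).comp (downL n k l p)) := by
    intro f g hfg
    have h0 : (upL n k l p hp).comp (downL n k l p) (f - g) = 0 := by
      rw [map_sub, hfg, sub_self]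
    have hraw : rup p (rdown p (toFun (k+p) (l-p) (f - g))) = 0 := by
      have e : toFun (k+p) (l-p) (upX n k l p hp (downX n k l p (f - g))) = 0 := by
        rw [show upX n k l p hp (downX n k l p (f - g))
              = (upL n k l p hp).comp (downL n k l p) (f - g) from rfl, h0, toFun_zero]
      rw [toFun_up k l p hp, toFun_down k l p hp] at e
      exact e
    have hzero : rinner (rdown p (toFun (k+p) (l-p) (f - g)))
        (rdown p (toFun (k+p) (l-p) (f - g))) = 0 := by
      rw [← radj p _ _, hraw, rinner_zero_left]
    have hdown0 : rdown p (toFun (k+p) (l-p) (f - g)) = 0 := rinner_self_eq_zero hzero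
    have hsw : rup p (rswap (toFun (k+p) (l-p) (f - g))) = 0 := by
      funext I J
      exact congrFun (congrFun hdown0 J) I
    have hhom : Hom (l - p) (k + p) (rswap (toFun (k+p) (l-p) (f - g))) := by
      intro I J hne
      obtain ⟨h1, h2⟩ := toFun_hom (k+p) (l-p) (f - g) J I hne
      exact ⟨h2, h1⟩
    have hle : (l - p) + p ≤ k + p := by omega
    have hs := raw_inj p hle _ hhom hsw
    have hC : toFun (k+p) (l-p) (f - g) = 0 := by
      funext I J
      exact congrFun (congrFun hs J) I
    exact sub_eq_zero.mp (toFun_eq_zero hC)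
  have hsurj := (LinearMap.injective_iff_surjective).mp hinj
  intro a
  obtain ⟨f, hf⟩ := hsurj a
  exact ⟨downX n k l p f, hf⟩

end BGGAux3

/-- (1) If `k+p ≤ ℓ`, then `S_[p] : FX(n,k,ℓ) → FX(n,k+p,ℓ−p)` is injective and
`S†_[p] : FX(n,k+p,ℓ−p) → FX(n,k,ℓ)` is surjective.  (2) If `k+p ≥ ℓ`, then `S_[p]` is
surjective and `S†_[p]` is injective. -/
theorem upX_downX_inj_surj (n k l p : ℕ) (hp1 : 1 ≤ p) (hp2 : p ≤ l) :
    (k + p ≤ l →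
      Function.Injective (upX n k l p hp2) ∧ Function.Surjective (downX n k l p)) ∧
    (l ≤ k + p →
      Function.Surjective (upX n k l p hp2) ∧ Function.Injective (downX n k l p)) := by
  constructor
  · intro h
    exact ⟨BGGAux3.upX_injective hp2 h, BGGAux3.downX_surjective hp2 h⟩
  · intro h
    exact ⟨BGGAux3.upX_surjective hp2 h, BGGAux3.downX_injective hp2 h⟩
end
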